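/- Local Lipschitz continuity of Φ: for all 0 < a ≤ b and 0 < c ≤ d there exists a constant M > 0 such that |Φ(s₁,ξ₁) − Φ(s₂,ξ₂)| ≤ M(|s₁−s₂| + |ξ₁−ξ₂|) for all (s₁,ξ₁), (s₂,ξ₂) ∈ [a,b]×[c,d]; in particular Φ is locally Lipschitz continuous on (0,∞)×(0,∞). -/

import Mathlib

open MeasureTheory Set

noncomputable section

/-- `E₀(W) = μ∫₀¹ (|D²W|² + 2ξ²|DW|² + ξ⁴W²) dx₂` -/
def E0 (μ ξ : ℝ) (W : ℝ → ℝ) : ℝ :=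
  μ * ∫ x in Icc (0 : ℝ) 1,
    ((deriv (deriv W) x) ^ 2 + 2 * ξ ^ 2 * (deriv W x) ^ 2 + ξ ^ 4 * (W x) ^ 2)

/-- `E₁(W) = −k₁(DW(1))² − k₀(DW(0))²` -/
def E1 (k0 k1 : ℝ) (W : ℝ → ℝ) : ℝ :=
  -k1 * (deriv W 1) ^ 2 - k0 * (deriv W 0) ^ 2

/-- `E₂(W) = gξ²∫₀¹ Dθ̄ W² dx₂` -/
def E2 (g ξ : ℝ) (θb : ℝ → ℝ) (W : ℝ → ℝ) : ℝ :=
  g * ξ ^ 2 * ∫ x in Icc (0 : ℝ) 1, deriv θb x * (W x) ^ 2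

/-- `E(W; s, ξ) = s·E₀(W) + s·E₁(W) + E₂(W)` -/
def Efun (μ g k0 k1 : ℝ) (θb : ℝ → ℝ) (s ξ : ℝ) (W : ℝ → ℝ) : ℝ :=
  s * E0 μ ξ W + s * E1 k0 k1 W + E2 g ξ θb W

/-- `J(W) = ∫₀¹ (|DW|² + ξ²W²) dx₂` -/
def Jfun (ξ : ℝ) (W : ℝ → ℝ) : ℝ :=
  ∫ x in Icc (0 : ℝ) 1, ((deriv W x) ^ 2 + ξ ^ 2 * (W x) ^ 2)

/-- admissible set `𝒜_ξ = {W ∈ C²([0,1]) : W(0)=W(1)=0, J(W)=1}` -/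
def Adm (ξ : ℝ) : Set (ℝ → ℝ) :=
  {W | ContDiff ℝ 2 W ∧ W 0 = 0 ∧ W 1 = 0 ∧ Jfun ξ W = 1}

/-- `Φ(s,ξ) = inf_{W ∈ 𝒜_ξ} E(W;s,ξ)` -/
def Phi (μ g k0 k1 : ℝ) (θb : ℝ → ℝ) (s ξ : ℝ) : ℝ :=
  sInf ((fun W => Efun μ g k0 k1 θb s ξ W) '' Adm ξ)

namespace PhiAux

lemma contInt {f : ℝ → ℝ} (hf : Continuous f) : IntegrableOn f (Icc (0:ℝ) 1) :=
  hf.integrableOn_Icc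

lemma c2_pack {W : ℝ → ℝ} (hW : ContDiff ℝ 2 W) :
    Continuous W ∧ Differentiable ℝ W ∧ Continuous (deriv W) ∧
      Differentiable ℝ (deriv W) ∧ Continuous (deriv (deriv W)) := by
  have h : ContDiff ℝ ((1:ℕ)+1) W := by exact_mod_cast hW
  rw [contDiff_succ_iff_deriv] at h
  have h2 : ContDiff ℝ 1 (deriv W) := h.2.2
  exact ⟨hW.continuous, h.1, h2.continuous, h2.differentiable one_ne_zero,
    h2.continuous_deriv le_rfl⟩

lemma Jfun_eq (ξ : ℝ) {W : ℝ → ℝ} (hW : ContDiff ℝ 2 W) :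
    Jfun ξ W = (∫ x in Icc (0:ℝ) 1, (deriv W x)^2)
      + ξ^2 * ∫ x in Icc (0:ℝ) 1, (W x)^2 := by
  obtain ⟨c0, d0, c1, d1, c2⟩ := c2_pack hW
  unfold Jfun
  rw [integral_add (f := fun x => (deriv W x)^2) (g := fun x => ξ^2 * (W x)^2)
    (contInt (c1.pow 2)) (contInt (continuous_const.mul (c0.pow 2))),
    integral_const_mul]

lemma E0_eq (μ ξ : ℝ) {W : ℝ → ℝ} (hW : ContDiff ℝ 2 W) :
    E0 μ ξ W = μ * ((∫ x in Icc (0:ℝ) 1, (deriv (deriv W) x)^2)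
      + 2 * ξ^2 * (∫ x in Icc (0:ℝ) 1, (deriv W x)^2)
      + ξ^4 * ∫ x in Icc (0:ℝ) 1, (W x)^2) := by
  obtain ⟨c0, d0, c1, d1, c2⟩ := c2_pack hW
  have step1 : ∫ x in Icc (0:ℝ) 1, ((deriv (deriv W) x)^2 + 2 * ξ^2 * (deriv W x)^2
        + ξ^4 * (W x)^2)
      = (∫ x in Icc (0:ℝ) 1, ((deriv (deriv W) x)^2 + 2 * ξ^2 * (deriv W x)^2))
        + ∫ x in Icc (0:ℝ) 1, ξ^4 * (W x)^2 :=
    integral_add ((contInt (c2.pow 2)).add (contInt (continuous_const.mul (c1.pow 2))))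
      (contInt (continuous_const.mul (c0.pow 2)))
  have step2 : ∫ x in Icc (0:ℝ) 1, ((deriv (deriv W) x)^2 + 2 * ξ^2 * (deriv W x)^2)
      = (∫ x in Icc (0:ℝ) 1, (deriv (deriv W) x)^2)
        + ∫ x in Icc (0:ℝ) 1, 2 * ξ^2 * (deriv W x)^2 :=
    integral_add (contInt (c2.pow 2)) (contInt (continuous_const.mul (c1.pow 2)))
  unfold E0
  rw [step1, step2, integral_const_mul, integral_const_mul]

lemma E0_nonneg {μ : ℝ} (hμ : 0 ≤ μ) (ξ : ℝ) (W : ℝ → ℝ) : 0 ≤ E0 μ ξ W :=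
  mul_nonneg hμ (setIntegral_nonneg measurableSet_Icc fun x _ => by positivity)

lemma E1_nonneg {k0 k1 : ℝ} (hk0 : k0 ≤ 0) (hk1 : k1 ≤ 0) (W : ℝ → ℝ) :
    0 ≤ E1 k0 k1 W := by
  unfold E1
  have h1 : 0 ≤ -k1 * (deriv W 1)^2 := mul_nonneg (by linarith) (sq_nonneg _)
  have h0 : 0 ≤ -k0 * (deriv W 0)^2 := mul_nonneg (by linarith) (sq_nonneg _)
  linarith

lemma IT_bound {θb W : ℝ → ℝ} (hθc : Continuous (deriv θb)) (hWc : Continuous W)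
    {K : ℝ} (hK : ∀ x ∈ Icc (0:ℝ) 1, |deriv θb x| ≤ K) :
    |∫ x in Icc (0:ℝ) 1, deriv θb x * (W x)^2| ≤ K * ∫ x in Icc (0:ℝ) 1, (W x)^2 := by
  have h1 : |∫ x in Icc (0:ℝ) 1, deriv θb x * (W x)^2|
      ≤ ∫ x in Icc (0:ℝ) 1, |deriv θb x * (W x)^2| := by
    simpa only [Real.norm_eq_abs] using
      norm_integral_le_integral_norm (μ := volume.restrict (Icc (0:ℝ) 1))
        (fun x => deriv θb x * (W x)^2)
  have h2 : ∫ x in Icc (0:ℝ) 1, |deriv θb x * (W x)^2|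
      ≤ ∫ x in Icc (0:ℝ) 1, K * (W x)^2 := by
    apply setIntegral_mono_on (contInt (hθc.mul (hWc.pow 2)).abs)
      (contInt (continuous_const.mul (hWc.pow 2))) measurableSet_Icc
    intro x hx
    show |deriv θb x * W x ^ 2| ≤ K * W x ^ 2
    rw [abs_mul, abs_of_nonneg (sq_nonneg (W x))]
    exact mul_le_mul_of_nonneg_right (hK x hx) (sq_nonneg _)
  rw [integral_const_mul] at h2
  linarith

lemma Jfun_scale (ξ r : ℝ) {W : ℝ → ℝ} (hW : ContDiff ℝ 2 W) :
    Jfun ξ (fun x => r * W x) = r^2 * Jfun ξ W := by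
  obtain ⟨c0, d0, c1, d1, c2⟩ := c2_pack hW
  have hd1 : deriv (fun x => r * W x) = fun x => r * deriv W x :=
    funext fun x => deriv_const_mul r (d0 x)
  unfold Jfun
  simp only [hd1]
  rw [← integral_const_mul]
  exact integral_congr_ae (ae_of_all _ fun x => by ring)

lemma Efun_scale (μ g k0 k1 s ξ r : ℝ) (θb : ℝ → ℝ) {W : ℝ → ℝ} (hW : ContDiff ℝ 2 W) :
    Efun μ g k0 k1 θb s ξ (fun x => r * W x) = r^2 * Efun μ g k0 k1 θb s ξ W := by
  obtain ⟨c0, d0, c1, d1, c2⟩ := c2_pack hW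
  have hd1 : deriv (fun x => r * W x) = fun x => r * deriv W x :=
    funext fun x => deriv_const_mul r (d0 x)
  have hd2 : deriv (fun x => r * deriv W x) = fun x => r * deriv (deriv W) x :=
    funext fun x => deriv_const_mul r (d1 x)
  have e0 : (∫ x in Icc (0:ℝ) 1, ((r * deriv (deriv W) x)^2
        + 2 * ξ^2 * (r * deriv W x)^2 + ξ^4 * (r * W x)^2))
      = r^2 * ∫ x in Icc (0:ℝ) 1, ((deriv (deriv W) x)^2
        + 2 * ξ^2 * (deriv W x)^2 + ξ^4 * (W x)^2) := by
    rw [← integral_const_mul]; exact integral_congr_ae (ae_of_all _ fun x => by ring)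
  have e2 : (∫ x in Icc (0:ℝ) 1, deriv θb x * (r * W x)^2)
      = r^2 * ∫ x in Icc (0:ℝ) 1, deriv θb x * (W x)^2 := by
    rw [← integral_const_mul]; exact integral_congr_ae (ae_of_all _ fun x => by ring)
  unfold Efun E0 E1 E2
  simp only [hd1, hd2]
  rw [e0, e2]
  ring

lemma adm_scale {ξ' : ℝ} {W : ℝ → ℝ} (hW : ContDiff ℝ 2 W) (h0 : W 0 = 0) (h1 : W 1 = 0)
    (ht : 0 < Jfun ξ' W) :
    (fun x => (Real.sqrt (Jfun ξ' W))⁻¹ * W x) ∈ Adm ξ' := by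
  refine ⟨contDiff_const.mul hW, by simp [h0], by simp [h1], ?_⟩
  rw [Jfun_scale ξ' _ hW, inv_pow, Real.sq_sqrt ht.le]
  exact inv_mul_cancel₀ (ne_of_gt ht)


def f0 : ℝ → ℝ := fun x => x - x^2

lemma f0_contDiff : ContDiff ℝ 2 f0 := by unfold f0; fun_prop

lemma f0_diff : Differentiable ℝ f0 := f0_contDiff.differentiable (by norm_num)

lemma f0_deriv : deriv f0 = fun x => 1 - 2*x := by
  funext x
  have : deriv f0 x = deriv (fun y : ℝ => y - y^2) x := rfl
  rw [this, deriv_fun_sub differentiableAt_fun_id (differentiableAt_pow 2), deriv_id'', deriv_pow_field]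
  norm_num

lemma f0_deriv_diff : Differentiable ℝ (deriv f0) := by rw [f0_deriv]; fun_prop

lemma f0_deriv2 : deriv (deriv f0) = fun _ => -2 := by
  rw [f0_deriv]
  funext x
  rw [deriv_fun_sub (differentiableAt_const 1) (differentiableAt_fun_id.const_mul 2),
    deriv_const, deriv_const_mul 2 differentiableAt_fun_id, deriv_id'']
  norm_num

lemma f0_I1 : ∫ x in Icc (0:ℝ) 1, (deriv f0 x)^2 = 1/3 := by
  simp only [f0_deriv]
  rw [integral_Icc_eq_integral_Ioc, ← intervalIntegral.integral_of_le zero_le_one]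
  have h : ∀ x : ℝ, (1 - 2*x)^2 = 4*x^2 - 4*x + 1 := fun x => by ring
  simp_rw [h]
  rw [intervalIntegral.integral_add, intervalIntegral.integral_sub]
  · rw [intervalIntegral.integral_const_mul, intervalIntegral.integral_const_mul,
      integral_pow, integral_id]
    norm_num
  · exact (continuous_const.mul (continuous_pow 2)).intervalIntegrable _ _
  · exact (continuous_const.mul continuous_id).intervalIntegrable _ _
  · exact ((continuous_const.mul (continuous_pow 2)).sub
      (continuous_const.mul continuous_id)).intervalIntegrable _ _
  · exact continuous_const.intervalIntegrable _ _


lemma adm_example (ξ : ℝ) :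
    ∃ W ∈ Adm ξ, (deriv W 0)^2 ≤ 3 ∧ (deriv W 1)^2 ≤ 3 ∧
      (∫ x in Icc (0:ℝ) 1, (deriv (deriv W) x)^2) ≤ 12 := by
  have hI2nn : 0 ≤ ∫ x in Icc (0:ℝ) 1, (f0 x)^2 :=
    setIntegral_nonneg measurableSet_Icc fun x _ => sq_nonneg _
  have hJ : Jfun ξ f0 = 1/3 + ξ^2 * ∫ x in Icc (0:ℝ) 1, (f0 x)^2 := by
    rw [Jfun_eq ξ f0_contDiff, f0_I1]
  have hJ3 : 1/3 ≤ Jfun ξ f0 := by nlinarith [mul_nonneg (sq_nonneg ξ) hI2nn]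
  have hJ0 : 0 < Jfun ξ f0 := by linarith
  set J := Jfun ξ f0 with hJdef
  set r := (Real.sqrt J)⁻¹ with hrdef
  have hr2 : r^2 = J⁻¹ := by rw [hrdef, inv_pow, Real.sq_sqrt hJ0.le]
  have hrJ : r^2 ≤ 3 := by
    rw [hr2]
    have hJi : J * J⁻¹ = 1 := mul_inv_cancel₀ (ne_of_gt hJ0)
    nlinarith [mul_nonneg (inv_nonneg.mpr hJ0.le) (by linarith : (0:ℝ) ≤ J - 1/3)]
  have hd1 : deriv (fun x => r * f0 x) = fun x => r * deriv f0 x :=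
    funext fun x => deriv_const_mul r (f0_diff x)
  have hd2 : deriv (fun x => r * deriv f0 x) = fun x => r * deriv (deriv f0) x :=
    funext fun x => deriv_const_mul r (f0_deriv_diff x)
  refine ⟨fun x => r * f0 x,
    adm_scale f0_contDiff (by simp [f0]) (by simp [f0]) hJ0, ?_, ?_, ?_⟩
  · simp only [hd1, f0_deriv]
    have : (r * (1 - 2*(0:ℝ)))^2 = r^2 := by ring
    rw [this]; exact hrJ
  · simp only [hd1, f0_deriv]
    have : (r * (1 - 2*(1:ℝ)))^2 = r^2 := by ring
    rw [this]; exact hrJ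
  · simp only [hd1, hd2, f0_deriv2]
    have hc : ∫ (_ : ℝ) in Icc (0:ℝ) 1, (r * -2)^2 = (r * -2)^2 := by simp
    rw [hc]
    nlinarith [hrJ]

end PhiAux


set_option maxHeartbeats 1000000 in
/-- Local Lipschitz continuity of `Φ`. -/
theorem phi_locally_lipschitz (μ g k0 k1 : ℝ) (hμ : 0 < μ) (hg : 0 < g)
    (hk0 : k0 ≤ 0) (hk1 : k1 ≤ 0) (θb : ℝ → ℝ) (hθb : ContDiff ℝ (⊤ : ℕ∞) θb)
    (a b c d : ℝ) (ha : 0 < a) (hab : a ≤ b) (hc : 0 < c) (hcd : c ≤ d) :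
    ∃ M : ℝ, 0 < M ∧ ∀ s₁ ∈ Icc a b, ∀ ξ₁ ∈ Icc c d, ∀ s₂ ∈ Icc a b, ∀ ξ₂ ∈ Icc c d,
      |Phi μ g k0 k1 θb s₁ ξ₁ - Phi μ g k0 k1 θb s₂ ξ₂| ≤
        M * (|s₁ - s₂| + |ξ₁ - ξ₂|) := by
  classical
  have hb : 0 < b := lt_of_lt_of_le ha hab
  have hd : 0 < d := lt_of_lt_of_le hc hcd
  have hc2 : (0:ℝ) < c^2 := by positivity
  have hθc : Continuous (deriv θb) := hθb.continuous_deriv (by simp)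
  obtain ⟨K₀, hK₀⟩ := isCompact_Icc.exists_bound_of_continuousOn hθc.continuousOn
  obtain ⟨K, hKdef⟩ : ∃ x : ℝ, x = max K₀ 0 := ⟨_, rfl⟩
  have hKnn : 0 ≤ K := by rw [hKdef]; exact le_max_right _ _
  have hK : ∀ x ∈ Icc (0:ℝ) 1, |deriv θb x| ≤ K := fun x hx => by
    rw [hKdef]
    exact le_trans (by simpa [Real.norm_eq_abs] using hK₀ x hx) (le_max_left _ _)
  have hgK : 0 ≤ g * K := mul_nonneg hg.le hKnn
  obtain ⟨U, hUdef⟩ : ∃ x : ℝ, x = b * (μ * (12 + 3*d^2) + 3*(-k0 - k1)) + g*K := ⟨_, rfl⟩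
  have hUnn : 0 ≤ U := by
    have h1 : 0 ≤ b * (μ * (12 + 3*d^2)) :=
      mul_nonneg hb.le (mul_nonneg hμ.le (by positivity))
    have h2 : 0 ≤ b * (3*(-k0 - k1)) :=
      mul_nonneg hb.le (by linarith only [hk0, hk1])
    rw [hUdef]; linarith only [h1, h2, hgK]
  obtain ⟨C, hCdef⟩ : ∃ x : ℝ, x = (U + 1 + g*K) / a := ⟨_, rfl⟩
  have hCnn : 0 ≤ C := by
    rw [hCdef]; exact div_nonneg (by linarith only [hUnn, hgK]) ha.le
  obtain ⟨C₁, hC₁def⟩ : ∃ x : ℝ, x = U + 1 + g*K := ⟨_, rfl⟩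
  have hC₁pos : 0 < C₁ := by rw [hC₁def]; linarith only [hUnn, hgK]
  have hco1 : (0:ℝ) ≤ 4*d + 4*d^3/c^2 := by
    have h1 : (0:ℝ) ≤ 4*d^3 := by positivity
    have h2 := div_nonneg h1 hc2.le
    linarith only [h2, hd]
  obtain ⟨M₁, hM₁def⟩ : ∃ x : ℝ, x = b*μ*(4*d + 4*d^3/c^2) + 2*g*d*K/c^2 + 2*C := ⟨_, rfl⟩
  have hcoK : (0:ℝ) ≤ 2*g*d*K/c^2 :=
    div_nonneg (mul_nonneg (mul_nonneg (mul_nonneg (by norm_num) hg.le) hd.le) hKnn) hc2.le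
  have hcobμ : (0:ℝ) ≤ b*μ*(4*d + 4*d^3/c^2) := mul_nonneg (mul_nonneg hb.le hμ.le) hco1
  have hM₁nn : 0 ≤ M₁ := by rw [hM₁def]; linarith only [hcobμ, hcoK, hCnn]
  have hcoC₁ : (0:ℝ) ≤ 4*C₁*d/c^2 :=
    div_nonneg (mul_nonneg (mul_nonneg (by norm_num) hC₁pos.le) hd.le) hc2.le
  have hcoU : (0:ℝ) ≤ (U + g*K + 1) * (4*d/c^2) :=
    mul_nonneg (by linarith only [hUnn, hgK])
      (div_nonneg (by linarith only [hd]) hc2.le)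
  obtain ⟨M, hMdef⟩ : ∃ x : ℝ, x = 2*M₁ + 4*C₁*d/c^2 + (U + g*K + 1) * (4*d/c^2) + 1 := ⟨_, rfl⟩
  have hMpos : 0 < M := by rw [hMdef]; linarith only [hM₁nn, hcoC₁, hcoU]
  -- lower bound for all competitors
  have hLB : ∀ s : ℝ, a ≤ s → ∀ ξ ∈ Icc c d,
      ∀ y ∈ (fun W => Efun μ g k0 k1 θb s ξ W) '' Adm ξ, -(g*K) ≤ y := by
    rintro s hsa ξ hξ y ⟨W, hWA, rfl⟩
    obtain ⟨hW2, hW0, hW1, hWJ⟩ := hWA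
    obtain ⟨cW0, dW0, cW1, dW1, cW2⟩ := PhiAux.c2_pack hW2
    obtain ⟨I1, hI1def⟩ : ∃ x : ℝ, x = ∫ x in Icc (0:ℝ) 1, (deriv W x)^2 := ⟨_, rfl⟩
    obtain ⟨I2, hI2def⟩ : ∃ x : ℝ, x = ∫ x in Icc (0:ℝ) 1, (W x)^2 := ⟨_, rfl⟩
    obtain ⟨T, hTdef⟩ : ∃ x : ℝ, x = ∫ x in Icc (0:ℝ) 1, deriv θb x * (W x)^2 := ⟨_, rfl⟩
    have hI1nn : 0 ≤ I1 := by
      rw [hI1def]; exact setIntegral_nonneg measurableSet_Icc fun x _ => sq_nonneg _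
    have hI2nn : 0 ≤ I2 := by
      rw [hI2def]; exact setIntegral_nonneg measurableSet_Icc fun x _ => sq_nonneg _
    have hJ1 : I1 + ξ^2 * I2 = 1 := by
      rw [hI1def, hI2def, ← PhiAux.Jfun_eq ξ hW2]; exact hWJ
    have hTb : |T| ≤ K * I2 := by
      rw [hTdef, hI2def]; exact PhiAux.IT_bound hθc cW0 hK
    have hξI2 : ξ^2 * I2 ≤ 1 := by linarith only [hJ1, hI1nn]
    have hE2 : -(g*K) ≤ E2 g ξ θb W := by
      unfold E2
      rw [← hTdef]
      have h1 : -(K * I2) ≤ T := (abs_le.mp hTb).1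
      have h2 := mul_le_mul_of_nonneg_left h1 (mul_nonneg hg.le (sq_nonneg ξ))
      have h3 : g*K*(ξ^2 * I2) ≤ g*K*1 := mul_le_mul_of_nonneg_left hξI2 hgK
      nlinarith only [h2, h3]
    have h0s : (0:ℝ) ≤ s := le_trans ha.le hsa
    have hE0 := PhiAux.E0_nonneg hμ.le ξ W
    have hE1 := PhiAux.E1_nonneg hk0 hk1 W
    have hh1 := mul_nonneg h0s hE0
    have hh2 := mul_nonneg h0s hE1
    unfold Efun
    beta_reduce
    linarith only [hh1, hh2, hE2]
  -- upper bound for Phi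
  have hUB : ∀ s ∈ Icc a b, ∀ ξ ∈ Icc c d, Phi μ g k0 k1 θb s ξ ≤ U := by
    intro s hs ξ hξ
    obtain ⟨W₀, hW₀A, hb0, hb1, hI0b⟩ := PhiAux.adm_example ξ
    have hBdd : BddBelow ((fun W => Efun μ g k0 k1 θb s ξ W) '' Adm ξ) :=
      ⟨-(g*K), fun y hy => hLB s hs.1 ξ hξ y hy⟩
    have hle : Phi μ g k0 k1 θb s ξ ≤ Efun μ g k0 k1 θb s ξ W₀ :=
      csInf_le hBdd (mem_image_of_mem _ hW₀A)
    obtain ⟨hW2, hW0, hW1, hWJ⟩ := hW₀A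
    obtain ⟨cW0, dW0, cW1, dW1, cW2⟩ := PhiAux.c2_pack hW2
    obtain ⟨I0, hI0def⟩ : ∃ x : ℝ, x = ∫ x in Icc (0:ℝ) 1, (deriv (deriv W₀) x)^2 := ⟨_, rfl⟩
    obtain ⟨I1, hI1def⟩ : ∃ x : ℝ, x = ∫ x in Icc (0:ℝ) 1, (deriv W₀ x)^2 := ⟨_, rfl⟩
    obtain ⟨I2, hI2def⟩ : ∃ x : ℝ, x = ∫ x in Icc (0:ℝ) 1, (W₀ x)^2 := ⟨_, rfl⟩
    obtain ⟨T, hTdef⟩ : ∃ x : ℝ, x = ∫ x in Icc (0:ℝ) 1, deriv θb x * (W₀ x)^2 := ⟨_, rfl⟩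
    rw [← hI0def] at hI0b
    have hI1nn : 0 ≤ I1 := by
      rw [hI1def]; exact setIntegral_nonneg measurableSet_Icc fun x _ => sq_nonneg _
    have hI2nn : 0 ≤ I2 := by
      rw [hI2def]; exact setIntegral_nonneg measurableSet_Icc fun x _ => sq_nonneg _
    have hJ1 : I1 + ξ^2 * I2 = 1 := by
      rw [hI1def, hI2def, ← PhiAux.Jfun_eq ξ hW2]; exact hWJ
    have hTb : |T| ≤ K * I2 := by
      rw [hTdef, hI2def]; exact PhiAux.IT_bound hθc cW0 hK
    have hξI2 : ξ^2 * I2 ≤ 1 := by linarith only [hJ1, hI1nn]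
    have hI1le : I1 ≤ 1 := by
      linarith only [mul_nonneg (sq_nonneg ξ) hI2nn, hJ1]
    have hξd : ξ^2 ≤ d^2 := by
      linarith only [mul_nonneg (sub_nonneg.mpr hξ.2)
        (by linarith only [hξ.1, hc, hd] : (0:ℝ) ≤ d + ξ)]
    have hE0b : E0 μ ξ W₀ ≤ μ * (12 + 3*d^2) := by
      rw [PhiAux.E0_eq μ ξ hW2, ← hI0def, ← hI1def, ← hI2def]
      have t1 : 2*ξ^2*I1 ≤ 2*d^2 := by
        linarith only [mul_nonneg (sq_nonneg ξ) (sub_nonneg.mpr hI1le), hξd]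
      have t2 : ξ^4*I2 ≤ d^2 := by
        linarith only [mul_le_mul_of_nonneg_left hξI2 (sq_nonneg ξ), hξd]
      have hX : I0 + 2*ξ^2*I1 + ξ^4*I2 ≤ 12 + 3*d^2 := by
        linarith only [hI0b, t1, t2]
      exact mul_le_mul_of_nonneg_left hX hμ.le
    have hE1b : E1 k0 k1 W₀ ≤ 3*(-k0 - k1) := by
      unfold E1
      have u1 : -k1*(deriv W₀ 1)^2 ≤ -k1*3 :=
        mul_le_mul_of_nonneg_left hb1 (by linarith only [hk1])
      have u0 : -k0*(deriv W₀ 0)^2 ≤ -k0*3 :=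
        mul_le_mul_of_nonneg_left hb0 (by linarith only [hk0])
      linarith only [u1, u0]
    have hE2b : E2 g ξ θb W₀ ≤ g*K := by
      unfold E2
      rw [← hTdef]
      have h1 : T ≤ K * I2 := (abs_le.mp hTb).2
      have h2 := mul_le_mul_of_nonneg_left h1 (mul_nonneg hg.le (sq_nonneg ξ))
      have h3 : g*K*(ξ^2 * I2) ≤ g*K*1 := mul_le_mul_of_nonneg_left hξI2 hgK
      nlinarith only [h2, h3]
    have hE0nn := PhiAux.E0_nonneg hμ.le ξ W₀
    have hE1nn := PhiAux.E1_nonneg hk0 hk1 W₀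
    have h0s : (0:ℝ) ≤ s := le_trans ha.le hs.1
    have v1 : s * E0 μ ξ W₀ ≤ b * (μ * (12 + 3*d^2)) := by
      have w1 : s * E0 μ ξ W₀ ≤ s * (μ * (12 + 3*d^2)) := mul_le_mul_of_nonneg_left hE0b h0s
      have w2 : s * (μ * (12 + 3*d^2)) ≤ b * (μ * (12 + 3*d^2)) :=
        mul_le_mul_of_nonneg_right hs.2 (mul_nonneg hμ.le (by positivity))
      linarith only [w1, w2]
    have v2 : s * E1 k0 k1 W₀ ≤ b * (3*(-k0 - k1)) := by
      have w1 : s * E1 k0 k1 W₀ ≤ s * (3*(-k0 - k1)) := mul_le_mul_of_nonneg_left hE1b h0s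
      have w2 : s * (3*(-k0 - k1)) ≤ b * (3*(-k0 - k1)) :=
        mul_le_mul_of_nonneg_right hs.2 (by linarith only [hk0, hk1])
      linarith only [w1, w2]
    have hEf : Efun μ g k0 k1 θb s ξ W₀ ≤ U := by
      unfold Efun; rw [hUdef]; linarith only [v1, v2, hE2b]
    linarith only [hle, hEf]
  -- key one-sided estimate
  have key : ∀ s₁ ∈ Icc a b, ∀ ξ₁ ∈ Icc c d, ∀ s₂ ∈ Icc a b, ∀ ξ₂ ∈ Icc c d,
      Phi μ g k0 k1 θb s₂ ξ₂ ≤ Phi μ g k0 k1 θb s₁ ξ₁ + M * (|s₁ - s₂| + |ξ₁ - ξ₂|) := by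
    intro s₁ hs₁ ξ₁ hξ₁ s₂ hs₂ ξ₂ hξ₂
    have hS : 0 ≤ |s₁ - s₂| + |ξ₁ - ξ₂| :=
      add_nonneg (abs_nonneg _) (abs_nonneg _)
    refine le_of_forall_pos_le_add fun ε hε => ?_
    obtain ⟨W₀', hW₀A', -, -, -⟩ := PhiAux.adm_example ξ₁
    have hne₁ : ((fun W => Efun μ g k0 k1 θb s₁ ξ₁ W) '' Adm ξ₁).Nonempty :=
      ⟨_, mem_image_of_mem _ hW₀A'⟩
    have hεm : 0 < min ε 1 := lt_min hε one_pos
    obtain ⟨y, hymem, hylt⟩ := Real.lt_sInf_add_pos hne₁ hεm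
    obtain ⟨W, hWA, hyW⟩ := hymem
    have hWe : Efun μ g k0 k1 θb s₁ ξ₁ W = y := hyW
    rw [← hWe] at hylt
    have hPhieq : sInf ((fun W => Efun μ g k0 k1 θb s₁ ξ₁ W) '' Adm ξ₁)
        = Phi μ g k0 k1 θb s₁ ξ₁ := rfl
    rw [hPhieq] at hylt
    have hPhi₁U : Phi μ g k0 k1 θb s₁ ξ₁ ≤ U := hUB s₁ hs₁ ξ₁ hξ₁
    have hPhi₁lb : -(g*K) ≤ Phi μ g k0 k1 θb s₁ ξ₁ :=
      le_csInf hne₁ (hLB s₁ hs₁.1 ξ₁ hξ₁)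
    have hPhi₂U : Phi μ g k0 k1 θb s₂ ξ₂ ≤ U := hUB s₂ hs₂ ξ₂ hξ₂
    by_cases hcase : 2*d*|ξ₁ - ξ₂| ≤ c^2/2
    · -- fine case
      obtain ⟨hW2, hW0, hW1, hWJ⟩ := hWA
      obtain ⟨cW0, dW0, cW1, dW1, cW2⟩ := PhiAux.c2_pack hW2
      obtain ⟨I0, hI0def⟩ : ∃ x : ℝ, x = ∫ x in Icc (0:ℝ) 1, (deriv (deriv W) x)^2 := ⟨_, rfl⟩
      obtain ⟨I1, hI1def⟩ : ∃ x : ℝ, x = ∫ x in Icc (0:ℝ) 1, (deriv W x)^2 := ⟨_, rfl⟩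
      obtain ⟨I2, hI2def⟩ : ∃ x : ℝ, x = ∫ x in Icc (0:ℝ) 1, (W x)^2 := ⟨_, rfl⟩
      obtain ⟨T, hTdef⟩ : ∃ x : ℝ, x = ∫ x in Icc (0:ℝ) 1, deriv θb x * (W x)^2 := ⟨_, rfl⟩
      have hI0nn : 0 ≤ I0 := by
        rw [hI0def]; exact setIntegral_nonneg measurableSet_Icc fun x _ => sq_nonneg _
      have hI1nn : 0 ≤ I1 := by
        rw [hI1def]; exact setIntegral_nonneg measurableSet_Icc fun x _ => sq_nonneg _
      have hI2nn : 0 ≤ I2 := by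
        rw [hI2def]; exact setIntegral_nonneg measurableSet_Icc fun x _ => sq_nonneg _
      have hJE : ∀ ξ' : ℝ, Jfun ξ' W = I1 + ξ'^2 * I2 := fun ξ' => by
        rw [PhiAux.Jfun_eq ξ' hW2, ← hI1def, ← hI2def]
      have hE0E : ∀ ξ' : ℝ, E0 μ ξ' W = μ * (I0 + 2*ξ'^2*I1 + ξ'^4*I2) := fun ξ' => by
        rw [PhiAux.E0_eq μ ξ' hW2, ← hI0def, ← hI1def, ← hI2def]
      have hE2E : ∀ ξ' : ℝ, E2 g ξ' θb W = g * ξ'^2 * T := fun ξ' => by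
        unfold E2; rw [← hTdef]
      have hJ1 : I1 + ξ₁^2 * I2 = 1 := by rw [← hJE ξ₁]; exact hWJ
      have hTb : |T| ≤ K * I2 := by
        rw [hTdef, hI2def]; exact PhiAux.IT_bound hθc cW0 hK
      have hE1nn : 0 ≤ E1 k0 k1 W := PhiAux.E1_nonneg hk0 hk1 W
      have hξ₁I2 : ξ₁^2 * I2 ≤ 1 := by linarith only [hJ1, hI1nn]
      have hI1le : I1 ≤ 1 := by
        linarith only [mul_nonneg (sq_nonneg ξ₁) hI2nn, hJ1]
      have hcx : c^2 ≤ ξ₁^2 := by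
        linarith only [mul_nonneg (sub_nonneg.mpr hξ₁.1)
          (by linarith only [hξ₁.1, hc] : (0:ℝ) ≤ ξ₁ + c)]
      have hI2c : I2 ≤ 1/c^2 := by
        rw [le_div_iff₀ hc2]
        have w : c^2 * I2 ≤ ξ₁^2 * I2 := mul_le_mul_of_nonneg_right hcx hI2nn
        linarith only [w, hJ1, hI1nn]
      obtain ⟨e, hedef⟩ : ∃ x : ℝ, x = Efun μ g k0 k1 θb s₁ ξ₁ W := ⟨_, rfl⟩
      rw [← hedef] at hylt
      have he : e = s₁ * (μ * (I0 + 2*ξ₁^2*I1 + ξ₁^4*I2)) + s₁ * E1 k0 k1 W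
          + g * ξ₁^2 * T := by
        rw [hedef]; unfold Efun; rw [hE0E ξ₁, hE2E ξ₁]
      have heU : e ≤ U + 1 := by
        have hm1 : min ε 1 ≤ 1 := min_le_right _ _
        linarith only [hylt, hm1, hPhi₁U]
      have hTlb : -(K * I2) ≤ T := (abs_le.mp hTb).1
      have hgT : -(g*K) ≤ g * ξ₁^2 * T := by
        have h2 := mul_le_mul_of_nonneg_left hTlb (mul_nonneg hg.le (sq_nonneg ξ₁))
        have h3 : g*K*(ξ₁^2 * I2) ≤ g*K*1 := mul_le_mul_of_nonneg_left hξ₁I2 hgK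
        nlinarith only [h2, h3]
      have hE0₁nn : 0 ≤ μ * (I0 + 2*ξ₁^2*I1 + ξ₁^4*I2) := by
        have q1 : 0 ≤ 2*ξ₁^2*I1 := mul_nonneg (by positivity) hI1nn
        have q2 : 0 ≤ ξ₁^4*I2 := mul_nonneg (by positivity) hI2nn
        exact mul_nonneg hμ.le (by linarith only [hI0nn, q1, q2])
      have helb : -(g*K) ≤ e := by
        rw [he]
        have hq1 := mul_nonneg (le_trans ha.le hs₁.1) hE0₁nn
        have hq2 := mul_nonneg (le_trans ha.le hs₁.1) hE1nn
        linarith only [hq1, hq2, hgT]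
      have hbe : |e| ≤ C₁ := by
        rw [abs_le, hC₁def]
        constructor <;> linarith only [helb, heU, hUnn, hgK]
      have hsum : s₁ * (μ * (I0 + 2*ξ₁^2*I1 + ξ₁^4*I2)) + s₁ * E1 k0 k1 W
          ≤ U + 1 + g*K := by linarith only [he, heU, hgT]
      have hE0₁C : μ * (I0 + 2*ξ₁^2*I1 + ξ₁^4*I2) ≤ C := by
        rw [hCdef, le_div_iff₀ ha]
        have w1 : a * (μ * (I0 + 2*ξ₁^2*I1 + ξ₁^4*I2))
            ≤ s₁ * (μ * (I0 + 2*ξ₁^2*I1 + ξ₁^4*I2)) :=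
          mul_le_mul_of_nonneg_right hs₁.1 hE0₁nn
        have w2 : 0 ≤ s₁ * E1 k0 k1 W := mul_nonneg (le_trans ha.le hs₁.1) hE1nn
        linarith only [w1, w2, hsum]
      have hEWC : E1 k0 k1 W ≤ C := by
        rw [hCdef, le_div_iff₀ ha]
        have w1 : a * E1 k0 k1 W ≤ s₁ * E1 k0 k1 W :=
          mul_le_mul_of_nonneg_right hs₁.1 hE1nn
        have w2 : 0 ≤ s₁ * (μ * (I0 + 2*ξ₁^2*I1 + ξ₁^4*I2)) :=
          mul_nonneg (le_trans ha.le hs₁.1) hE0₁nn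
        linarith only [w1, w2, hsum]
      have habs2 : |ξ₂^2 - ξ₁^2| ≤ 2*d*|ξ₁ - ξ₂| := by
        have h' : ξ₂^2 - ξ₁^2 = (ξ₂ - ξ₁) * (ξ₂ + ξ₁) := by ring
        rw [h', abs_mul, abs_sub_comm]
        have hpl : |ξ₂ + ξ₁| ≤ 2*d := by
          rw [abs_of_nonneg (by linarith only [hξ₁.1, hξ₂.1, hc] : (0:ℝ) ≤ ξ₂ + ξ₁)]
          linarith only [hξ₁.2, hξ₂.2]
        calc |ξ₁ - ξ₂| * |ξ₂ + ξ₁| ≤ |ξ₁ - ξ₂| * (2*d) :=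
              mul_le_mul_of_nonneg_left hpl (abs_nonneg _)
          _ = 2*d*|ξ₁ - ξ₂| := by ring
      have hdxnn : (0:ℝ) ≤ 2*d*|ξ₁ - ξ₂| :=
        mul_nonneg (by linarith only [hd]) (abs_nonneg _)
      have habs4 : |ξ₂^4 - ξ₁^4| ≤ 4*d^3*|ξ₁ - ξ₂| := by
        have h' : ξ₂^4 - ξ₁^4 = (ξ₂^2 - ξ₁^2) * (ξ₂^2 + ξ₁^2) := by ring
        rw [h', abs_mul]
        have h2 : |ξ₂^2 + ξ₁^2| ≤ 2*d^2 := by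
          rw [abs_of_nonneg (by positivity)]
          have e1 : ξ₁^2 ≤ d^2 := by
            linarith only [mul_nonneg (sub_nonneg.mpr hξ₁.2)
              (by linarith only [hξ₁.1, hc, hd] : (0:ℝ) ≤ d + ξ₁)]
          have e2 : ξ₂^2 ≤ d^2 := by
            linarith only [mul_nonneg (sub_nonneg.mpr hξ₂.2)
              (by linarith only [hξ₂.1, hc, hd] : (0:ℝ) ≤ d + ξ₂)]
          linarith only [e1, e2]
        calc |ξ₂^2 - ξ₁^2| * |ξ₂^2 + ξ₁^2| ≤ (2*d*|ξ₁ - ξ₂|) * (2*d^2) :=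
              mul_le_mul habs2 h2 (abs_nonneg _) hdxnn
          _ = 4*d^3*|ξ₁ - ξ₂| := by ring
      obtain ⟨t, htdef⟩ : ∃ x : ℝ, x = Jfun ξ₂ W := ⟨_, rfl⟩
      have ht_eq0 : t = I1 + ξ₂^2 * I2 := by rw [htdef]; exact hJE ξ₂
      have ht1 : |t - 1| ≤ (2*d/c^2) * |ξ₁ - ξ₂| := by
        have hde : t - 1 = (ξ₂^2 - ξ₁^2) * I2 := by
          rw [ht_eq0]; linear_combination hJ1
        rw [hde, abs_mul, abs_of_nonneg hI2nn]
        calc |ξ₂^2 - ξ₁^2| * I2 ≤ (2*d*|ξ₁ - ξ₂|) * (1/c^2) :=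
              mul_le_mul habs2 hI2c hI2nn hdxnn
          _ = (2*d/c^2) * |ξ₁ - ξ₂| := by ring
      have ht_half : |t - 1| ≤ 1/2 := by
        have w : (2*d*|ξ₁ - ξ₂|) * (1/c^2) ≤ (c^2/2) * (1/c^2) :=
          mul_le_mul_of_nonneg_right hcase (by positivity)
        have w2 : (c^2/2) * (1/c^2) = 1/2 := by field_simp
        have w3 : (2*d/c^2) * |ξ₁ - ξ₂| = (2*d*|ξ₁ - ξ₂|) * (1/c^2) := by ring
        linarith only [ht1, w, w2, w3]
      have ht_lb : (1:ℝ)/2 ≤ t := by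
        have h := (abs_le.mp ht_half).1
        linarith only [h]
      have ht0 : 0 < t := by linarith only [ht_lb]
      have ht0' : 0 < Jfun ξ₂ W := by rw [← htdef]; exact ht0
      have hVadm : (fun x => (Real.sqrt t)⁻¹ * W x) ∈ Adm ξ₂ := by
        have h := PhiAux.adm_scale (ξ' := ξ₂) hW2 hW0 hW1 ht0'
        rw [← htdef] at h
        exact h
      have hBdd₂ : BddBelow ((fun W => Efun μ g k0 k1 θb s₂ ξ₂ W) '' Adm ξ₂) :=
        ⟨-(g*K), fun y hy => hLB s₂ hs₂.1 ξ₂ hξ₂ y hy⟩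
      have hPhi₂le : Phi μ g k0 k1 θb s₂ ξ₂
          ≤ Efun μ g k0 k1 θb s₂ ξ₂ (fun x => (Real.sqrt t)⁻¹ * W x) :=
        csInf_le hBdd₂ (mem_image_of_mem _ hVadm)
      have hscale := PhiAux.Efun_scale μ g k0 k1 s₂ ξ₂ ((Real.sqrt t)⁻¹) θb hW2
      have hr2 : ((Real.sqrt t)⁻¹)^2 = 1/t := by
        rw [inv_pow, Real.sq_sqrt ht0.le, one_div]
      obtain ⟨A, hAdef⟩ : ∃ x : ℝ, x = Efun μ g k0 k1 θb s₂ ξ₂ W := ⟨_, rfl⟩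
      have hA : A = s₂ * (μ * (I0 + 2*ξ₂^2*I1 + ξ₂^4*I2)) + s₂ * E1 k0 k1 W
          + g * ξ₂^2 * T := by
        rw [hAdef]; unfold Efun; rw [hE0E ξ₂, hE2E ξ₂]
      have hp1 : 2*(ξ₂^2 - ξ₁^2)*I1 ≤ 2*(2*d*|ξ₁ - ξ₂|) := by
        have q1 : (ξ₂^2 - ξ₁^2)*I1 ≤ (2*d*|ξ₁ - ξ₂|)*I1 :=
          mul_le_mul_of_nonneg_right (le_trans (le_abs_self _) habs2) hI1nn
        have q2 : (2*d*|ξ₁ - ξ₂|)*I1 ≤ (2*d*|ξ₁ - ξ₂|)*1 :=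
          mul_le_mul_of_nonneg_left hI1le hdxnn
        linarith only [q1, q2]
      have hd3nn : (0:ℝ) ≤ 4*d^3*|ξ₁ - ξ₂| :=
        mul_nonneg (mul_nonneg (by norm_num) (pow_nonneg hd.le 3)) (abs_nonneg _)
      have hp2 : (ξ₂^4 - ξ₁^4)*I2 ≤ (4*d^3*|ξ₁ - ξ₂|)*(1/c^2) := by
        have q1 : (ξ₂^4 - ξ₁^4)*I2 ≤ (4*d^3*|ξ₁ - ξ₂|)*I2 :=
          mul_le_mul_of_nonneg_right (le_trans (le_abs_self _) habs4) hI2nn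
        have q2 : (4*d^3*|ξ₁ - ξ₂|)*I2 ≤ (4*d^3*|ξ₁ - ξ₂|)*(1/c^2) :=
          mul_le_mul_of_nonneg_left hI2c hd3nn
        linarith only [q1, q2]
      have hPb : μ * (2*(ξ₂^2 - ξ₁^2)*I1 + (ξ₂^4 - ξ₁^4)*I2)
          ≤ μ * ((4*d + 4*d^3/c^2) * |ξ₁ - ξ₂|) := by
        apply mul_le_mul_of_nonneg_left _ hμ.le
        ring_nf at hp1 hp2 ⊢
        linarith only [hp1, hp2]
      have hterm1 : s₂ * (μ * (2*(ξ₂^2 - ξ₁^2)*I1 + (ξ₂^4 - ξ₁^4)*I2))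
          ≤ b * (μ * ((4*d + 4*d^3/c^2) * |ξ₁ - ξ₂|)) := by
        have w1 := mul_le_mul_of_nonneg_left hPb (le_trans ha.le hs₂.1)
        have w2 : s₂ * (μ * ((4*d + 4*d^3/c^2) * |ξ₁ - ξ₂|))
            ≤ b * (μ * ((4*d + 4*d^3/c^2) * |ξ₁ - ξ₂|)) :=
          mul_le_mul_of_nonneg_right hs₂.2
            (mul_nonneg hμ.le (mul_nonneg hco1 (abs_nonneg _)))
        linarith only [w1, w2]
      have hXnn : 0 ≤ μ * (I0 + 2*ξ₁^2*I1 + ξ₁^4*I2) + E1 k0 k1 W := by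
        linarith only [hE0₁nn, hE1nn]
      have hX2C : μ * (I0 + 2*ξ₁^2*I1 + ξ₁^4*I2) + E1 k0 k1 W ≤ 2*C := by
        linarith only [hE0₁C, hEWC]
      have hterm2 : (s₂ - s₁) * (μ * (I0 + 2*ξ₁^2*I1 + ξ₁^4*I2) + E1 k0 k1 W)
          ≤ |s₁ - s₂| * (2*C) := by
        have w1 : (s₂ - s₁) * (μ * (I0 + 2*ξ₁^2*I1 + ξ₁^4*I2) + E1 k0 k1 W)
            ≤ |s₂ - s₁| * (μ * (I0 + 2*ξ₁^2*I1 + ξ₁^4*I2) + E1 k0 k1 W) :=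
          mul_le_mul_of_nonneg_right (le_abs_self _) hXnn
        have w2 : |s₂ - s₁| * (μ * (I0 + 2*ξ₁^2*I1 + ξ₁^4*I2) + E1 k0 k1 W)
            ≤ |s₂ - s₁| * (2*C) := mul_le_mul_of_nonneg_left hX2C (abs_nonneg _)
        have w3 : |s₂ - s₁| = |s₁ - s₂| := abs_sub_comm _ _
        rw [w3] at w1 w2
        linarith only [w1, w2]
      have hTK : |T| ≤ K * (1/c^2) := by
        have h := mul_le_mul_of_nonneg_left hI2c hKnn
        linarith only [h, hTb]
      have hterm3 : g * (ξ₂^2 - ξ₁^2) * T ≤ g * ((2*d*|ξ₁ - ξ₂|) * (K * (1/c^2))) := by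
        have w1 : (ξ₂^2 - ξ₁^2) * T ≤ |ξ₂^2 - ξ₁^2| * |T| := by
          calc (ξ₂^2 - ξ₁^2) * T ≤ |(ξ₂^2 - ξ₁^2) * T| := le_abs_self _
            _ = |ξ₂^2 - ξ₁^2| * |T| := abs_mul _ _
        have w2 : |ξ₂^2 - ξ₁^2| * |T| ≤ (2*d*|ξ₁ - ξ₂|) * (K * (1/c^2)) :=
          mul_le_mul habs2 hTK (abs_nonneg _) hdxnn
        have w3 := mul_le_mul_of_nonneg_left (le_trans w1 w2) hg.le
        rw [mul_assoc]
        exact w3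
      have hAe : A ≤ e + M₁ * (|s₁ - s₂| + |ξ₁ - ξ₂|) := by
        have hdecomp : A - e = s₂ * (μ * (2*(ξ₂^2 - ξ₁^2)*I1 + (ξ₂^4 - ξ₁^4)*I2))
            + (s₂ - s₁) * (μ * (I0 + 2*ξ₁^2*I1 + ξ₁^4*I2) + E1 k0 k1 W)
            + g * (ξ₂^2 - ξ₁^2) * T := by
          rw [hA, he]; ring
        have n1 : 0 ≤ (b*μ*(4*d + 4*d^3/c^2)) * |s₁ - s₂| := mul_nonneg hcobμ (abs_nonneg _)
        have n2 : 0 ≤ (2*g*d*K/c^2) * |s₁ - s₂| := mul_nonneg hcoK (abs_nonneg _)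
        have n3 : 0 ≤ (2*C) * |ξ₁ - ξ₂| :=
          mul_nonneg (by linarith only [hCnn]) (abs_nonneg _)
        rw [hM₁def]
        ring_nf at hdecomp hterm1 hterm2 hterm3 n1 n2 n3 ⊢
        linarith only [hdecomp, hterm1, hterm2, hterm3, n1, n2, n3]
      have hMhalf : M₁ + 2*C₁*d/c^2 ≤ M/2 := by
        have hcoU' := hcoU
        rw [hMdef]
        ring_nf at hcoU' ⊢
        linarith only [hcoU']
      obtain ⟨S, hSdef⟩ : ∃ x : ℝ, x = |s₁ - s₂| + |ξ₁ - ξ₂| := ⟨_, rfl⟩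
      rw [← hSdef] at hAe
      have hSnn : 0 ≤ S := by rw [hSdef]; exact hS
      have hMS : 0 ≤ M * S := mul_nonneg hMpos.le hSnn
      have q2 : |e + M*S| ≤ C₁ + M*S := by
        calc |e + M*S| ≤ |e| + |M*S| := abs_add_le _ _
          _ = |e| + M*S := by rw [abs_of_nonneg hMS]
          _ ≤ C₁ + M*S := by linarith only [hbe]
      have p1 : -((C₁ + M*S) * |t - 1|) ≤ (e + M*S) * (t - 1) := by
        have q1 : |(e + M*S) * (t - 1)| = |e + M*S| * |t - 1| := abs_mul _ _
        have q3 : |e + M*S| * |t - 1| ≤ (C₁ + M*S) * |t - 1| :=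
          mul_le_mul_of_nonneg_right q2 (abs_nonneg _)
        have q4 := neg_abs_le ((e + M*S) * (t - 1))
        linarith only [q1, q3, q4]
      have p2 : (C₁ + M*S) * |t - 1| ≤ C₁ * ((2*d/c^2) * |ξ₁ - ξ₂|) + M*S*(1/2) := by
        have r1 : C₁ * |t - 1| ≤ C₁ * ((2*d/c^2) * |ξ₁ - ξ₂|) :=
          mul_le_mul_of_nonneg_left ht1 hC₁pos.le
        have r2 : (M*S) * |t - 1| ≤ (M*S) * (1/2) :=
          mul_le_mul_of_nonneg_left ht_half hMS
        linarith only [r1, r2]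
      have p4 : (2*d*C₁/c^2) * |ξ₁ - ξ₂| ≤ (2*d*C₁/c^2) * S := by
        apply mul_le_mul_of_nonneg_left _
          (div_nonneg (mul_nonneg (mul_nonneg (by norm_num) hd.le) hC₁pos.le) hc2.le)
        rw [hSdef]
        linarith only [abs_nonneg (s₁ - s₂)]
      have p5 : (M₁ + 2*C₁*d/c^2) * S ≤ (M/2) * S := mul_le_mul_of_nonneg_right hMhalf hSnn
      have hAet : A ≤ (e + M*S) * t := by
        ring_nf at p1 p2 hAe p4 p5 ⊢
        linarith only [p1, p2, hAe, p4, p5, hMS, hSnn]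
      have hdiv : A / t ≤ e + M*S := by rw [div_le_iff₀ ht0]; exact hAet
      have hVeq : Efun μ g k0 k1 θb s₂ ξ₂ (fun x => (Real.sqrt t)⁻¹ * W x) = A / t := by
        rw [hscale, hr2, hAdef]; ring
      have hfin : Phi μ g k0 k1 θb s₂ ξ₂ ≤ e + M*S := by
        calc Phi μ g k0 k1 θb s₂ ξ₂ ≤ _ := hPhi₂le
          _ = A / t := hVeq
          _ ≤ e + M*S := hdiv
      have hm2 : min ε 1 ≤ ε := min_le_left _ _
      rw [← hSdef]
      linarith only [hfin, hylt, hm2]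
    · push_neg at hcase
      have h3 : (U + g*K + 1) * c^2 ≤ (U + g*K + 1) * (4*d*|ξ₁ - ξ₂|) :=
        mul_le_mul_of_nonneg_left (by linarith only [hcase])
          (by linarith only [hUnn, hgK])
      have h4 : U + g*K + 1 ≤ (U + g*K + 1) * (4*d*|ξ₁ - ξ₂|) / c^2 :=
        (le_div_iff₀ hc2).mpr (by linarith only [h3])
      have hre : (U + g*K + 1) * (4*d*|ξ₁ - ξ₂|) / c^2
          = (U + g*K + 1) * (4*d/c^2) * |ξ₁ - ξ₂| := by ring
      rw [hre] at h4
      have h5 : (U + g*K + 1) * (4*d/c^2) * |ξ₁ - ξ₂| ≤ M * (|s₁ - s₂| + |ξ₁ - ξ₂|) := by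
        have hMge : (U + g*K + 1) * (4*d/c^2) ≤ M := by
          rw [hMdef]; linarith only [hM₁nn, hcoC₁]
        have w1 : (U + g*K + 1) * (4*d/c^2) * |ξ₁ - ξ₂| ≤ M * |ξ₁ - ξ₂| :=
          mul_le_mul_of_nonneg_right hMge (abs_nonneg _)
        linarith only [w1, mul_nonneg hMpos.le (abs_nonneg (s₁ - s₂))]
      linarith only [hPhi₂U, hPhi₁lb, h4, h5, hε]
  refine ⟨M, hMpos, ?_⟩
  intro s₁ hs₁ ξ₁ hξ₁ s₂ hs₂ ξ₂ hξ₂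
  rw [abs_sub_le_iff]
  constructor
  · have h := key s₂ hs₂ ξ₂ hξ₂ s₁ hs₁ ξ₁ hξ₁
    rw [abs_sub_comm s₂ s₁, abs_sub_comm ξ₂ ξ₁] at h
    linarith only [h]
  · have h := key s₁ hs₁ ξ₁ hξ₁ s₂ hs₂ ξ₂ hξ₂
    linarith only [h]
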